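/- Let R be a right po-coherent po-ring and let (A_i)_{i ∈ I} be a family of po-coherent partially ordered right R-modules. Then the direct sum ⊕_{i ∈ I} A_i, partially ordered coordinatewise, is a po-coherent partially ordered right R-module. -/

import Mathlib

/-- A *po-ring*: a ring equipped with a partial order such that addition is
translation-invariant, multiplication by nonnegative elements (on either side) is monotone,
the ring is directed (every element is a difference of two nonnegative elements),
and `0 ≤ 1`. -/
class PORing (R : Type*) extends Ring R, PartialOrder R where
  add_le_add_right' : ∀ a b : R, a ≤ b → ∀ c : R, a + c ≤ b + c
  mul_le_mul_of_nonneg_right' : ∀ a b c : R, a ≤ b → 0 ≤ c → a * c ≤ b * c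
  mul_le_mul_of_nonneg_left' : ∀ a b c : R, a ≤ b → 0 ≤ c → c * a ≤ c * b
  directed' : ∀ x : R, ∃ y z : R, 0 ≤ y ∧ 0 ≤ z ∧ x = y - z
  zero_le_one' : (0 : R) ≤ 1

/-- A *partially ordered right module* over a po-ring `R`: an additive abelian group with a
right `R`-action `rsmul` (written on the right, so `rsmul a ξ` is `aξ`), with the usual
right-module axioms, such that addition is translation-invariant and
`0 ≤ a`, `0 ≤ ξ` imply `0 ≤ aξ`. -/
class PORightModule (R : Type*) [PORing R] (A : Type*) [AddCommGroup A] [PartialOrder A] where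
  rsmul : A → R → A
  add_rsmul : ∀ (a b : A) (r : R), rsmul (a + b) r = rsmul a r + rsmul b r
  rsmul_add : ∀ (a : A) (r s : R), rsmul a (r + s) = rsmul a r + rsmul a s
  rsmul_mul : ∀ (a : A) (r s : R), rsmul a (r * s) = rsmul (rsmul a r) s
  rsmul_one : ∀ a : A, rsmul a 1 = a
  add_le_add_right' : ∀ a b : A, a ≤ b → ∀ c : A, a + c ≤ b + c
  rsmul_nonneg : ∀ (a : A) (r : R), 0 ≤ a → 0 ≤ r → 0 ≤ rsmul a r

open PORightModule

/-- A po-ring is a partially ordered right module over itself. -/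
instance PORing.toPORightModule (R : Type*) [PORing R] : PORightModule R R where
  rsmul := (· * ·)
  add_rsmul := add_mul
  rsmul_add := mul_add
  rsmul_mul a r s := (mul_assoc a r s).symm
  rsmul_one := mul_one
  add_le_add_right' := PORing.add_le_add_right'
  rsmul_nonneg a r ha hr := by
    have h := PORing.mul_le_mul_of_nonneg_right' 0 a r ha hr
    simpa using h

/-- Products of partially ordered right modules, ordered coordinatewise. -/
instance Pi.instPORightModule {R : Type*} [PORing R] {ι : Type*} {A : ι → Type*}
    [∀ i, AddCommGroup (A i)] [∀ i, PartialOrder (A i)] [∀ i, PORightModule R (A i)] :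
    PORightModule R (∀ i, A i) where
  rsmul x r i := rsmul (x i) r
  add_rsmul a b r := funext fun i => add_rsmul (a i) (b i) r
  rsmul_add a r s := funext fun i => rsmul_add (a i) r s
  rsmul_mul a r s := funext fun i => rsmul_mul (a i) r s
  rsmul_one a := funext fun i => rsmul_one (a i)
  add_le_add_right' a b h c := by
    intro i
    exact PORightModule.add_le_add_right' R (a i) (b i) (h i) (c i)
  rsmul_nonneg a r ha hr := by
    intro i
    exact PORightModule.rsmul_nonneg (a i) r (ha i) hr

/-- Binary products of partially ordered right modules, ordered coordinatewise. -/
instance Prod.instPORightModule {R : Type*} [PORing R] {A B : Type*}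
    [AddCommGroup A] [PartialOrder A] [PORightModule R A]
    [AddCommGroup B] [PartialOrder B] [PORightModule R B] :
    PORightModule R (A × B) where
  rsmul x r := (rsmul x.1 r, rsmul x.2 r)
  add_rsmul a b r := by
    refine Prod.ext ?_ ?_ <;> simp [PORightModule.add_rsmul]
  rsmul_add a r s := by
    refine Prod.ext ?_ ?_ <;> simp [PORightModule.rsmul_add]
  rsmul_mul a r s := by
    refine Prod.ext ?_ ?_ <;> simp [PORightModule.rsmul_mul]
  rsmul_one a := by
    refine Prod.ext ?_ ?_ <;> simp [PORightModule.rsmul_one]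
  add_le_add_right' a b h c := by
    rw [Prod.le_def] at h ⊢
    constructor
    · simpa using PORightModule.add_le_add_right' R a.1 b.1 h.1 c.1
    · simpa using PORightModule.add_le_add_right' R a.2 b.2 h.2 c.2
  rsmul_nonneg a r ha hr := by
    rw [Prod.le_def] at ha ⊢
    constructor
    · simpa using PORightModule.rsmul_nonneg a.1 r (by simpa using ha.1) hr
    · simpa using PORightModule.rsmul_nonneg a.2 r (by simpa using ha.2) hr

section Defs

variable (R : Type*) [PORing R]

/-- The product `UX = a₁ξ₁ + ⋯ + aₙξₙ` of a row matrix `U = (a₁,…,aₙ)` with entries in `A`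
and a column matrix `X = (ξ₁,…,ξₙ)ᵗ` with entries in `R`. -/
def rowMul {A : Type*} [AddCommGroup A] [PartialOrder A] [PORightModule R A]
    {n : ℕ} (U : Fin n → A) (X : Fin n → R) : A :=
  ∑ i, rsmul (U i) (X i)

/-- A subset `S` of a partially ordered right `R`-module is a *finitely generated
`R⁺`-subsemimodule* if it is the set of all `R⁺`-linear combinations of some finite subset. -/
def IsFGConeIn {A : Type*} [AddCommGroup A] [PartialOrder A] [PORightModule R A]
    (S : Set A) : Prop :=
  ∃ (k : ℕ) (g : Fin k → A),
    S = { a | ∃ Y : Fin k → R, (∀ i, 0 ≤ Y i) ∧ a = rowMul R g Y }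

/-- `A` is *finitely related at* the row matrix `U ∈ M_{1,n}(A)` if the solution set of the
mixed system `UX ≥ 0, X ≥ 0` is a finitely generated `R⁺`-subsemimodule of `M_{n,1}(R)`. -/
def FinitelyRelatedAt {A : Type*} [AddCommGroup A] [PartialOrder A] [PORightModule R A]
    {n : ℕ} (U : Fin n → A) : Prop :=
  IsFGConeIn R {X : Fin n → R | 0 ≤ rowMul R U X ∧ ∀ i, 0 ≤ X i}

/-- `A` is *finitely po-presented at* the row matrix `U ∈ M_{1,n}(A)` if the solution set of
the system `UX ≥ 0` is a finitely generated `R⁺`-subsemimodule of `M_{n,1}(R)`. -/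
def FinitelyPoPresentedAt {A : Type*} [AddCommGroup A] [PartialOrder A] [PORightModule R A]
    {n : ℕ} (U : Fin n → A) : Prop :=
  IsFGConeIn R {X : Fin n → R | 0 ≤ rowMul R U X}

/-- A row matrix `U` is *spanning* if its entries generate `A` as a right `R`-module, i.e.
every element of `A` is an `R`-linear combination `UX` of the entries. -/
def SpanningRow {A : Type*} [AddCommGroup A] [PartialOrder A] [PORightModule R A]
    {n : ℕ} (U : Fin n → A) : Prop :=
  ∀ a : A, ∃ X : Fin n → R, a = rowMul R U X

variable (A : Type*) [AddCommGroup A] [PartialOrder A] [PORightModule R A]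

/-- `A` is *finitely po-presented* if it is finitely po-presented at some spanning row
matrix. -/
def FinitelyPoPresented : Prop :=
  ∃ (n : ℕ) (U : Fin n → A), SpanningRow R U ∧ FinitelyPoPresentedAt R U

/-- `A` is *finitely related* if it is a finitely generated right `R`-module and is finitely
related at every spanning row matrix. -/
def FinitelyRelatedMod : Prop :=
  (∃ (n : ℕ) (U : Fin n → A), SpanningRow R U) ∧
    ∀ (n : ℕ) (U : Fin n → A), SpanningRow R U → FinitelyRelatedAt R U

/-- `A` is *po-coherent* if it is finitely related at every row matrix of elements of `A`. -/
def PoCoherent : Prop :=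
  ∀ (n : ℕ) (U : Fin n → A), FinitelyRelatedAt R U

end Defs

/-- A po-ring is *right po-coherent* if it is po-coherent as a partially ordered right module
over itself. -/
def RightPoCoherent (R : Type*) [PORing R] : Prop :=
  PoCoherent R R

theorem rsmul_zero_left {R : Type*} [PORing R] {A : Type*} [AddCommGroup A] [PartialOrder A]
    [PORightModule R A] (r : R) : rsmul (0 : A) r = (0 : A) := by
  have h := PORightModule.add_rsmul (0 : A) (0 : A) r
  rw [add_zero] at h
  simpa using h

/-- Direct sums of partially ordered right modules, ordered coordinatewise. -/
instance DFinsupp.instPORightModule {R : Type*} [PORing R] {ι : Type*} {A : ι → Type*}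
    [∀ i, AddCommGroup (A i)] [∀ i, PartialOrder (A i)] [∀ i, PORightModule R (A i)] :
    PORightModule R (Π₀ i, A i) where
  rsmul x r := x.mapRange (fun _ a => rsmul a r) (fun _ => rsmul_zero_left r)
  add_rsmul a b r := by
    ext i
    simp [PORightModule.add_rsmul]
  rsmul_add a r s := by
    ext i
    simp [PORightModule.rsmul_add]
  rsmul_mul a r s := by
    ext i
    simp [PORightModule.rsmul_mul]
  rsmul_one a := by
    ext i
    simp [PORightModule.rsmul_one]
  add_le_add_right' a b h c := by
    rw [DFinsupp.le_def] at h ⊢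
    intro i
    simp only [DFinsupp.add_apply]
    exact PORightModule.add_le_add_right' R (a i) (b i) (h i) (c i)
  rsmul_nonneg a r ha hr := by
    rw [DFinsupp.le_def] at ha ⊢
    intro i
    simp only [DFinsupp.mapRange_apply, DFinsupp.coe_zero, Pi.zero_apply] at ha ⊢
    exact PORightModule.rsmul_nonneg (a i) r (ha i) hr

/-! Solution sets are intersected one coordinate of the direct sum at a time: if a solution
cone is spanned by the columns `g₁, …, g_k`, then imposing one more inequality `UX ≥ 0` with
values in a po-coherent module `A` amounts to solving `(Ug₁, …, Ug_k) Y ≥ 0, Y ≥ 0`, whose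
solutions form a finitely generated cone again. Only the finitely many coordinates in the
supports of the entries of a row contribute inequalities, and the starting cone, the
nonnegative orthant, is spanned by the unit vectors. -/

section RightModule

variable {R : Type*} [PORing R] {A : Type*} [AddCommGroup A] [PartialOrder A]
  [PORightModule R A]

theorem sum_rsmul {σ : Type*} (t : Finset σ) (f : σ → A) (r : R) :
    rsmul (∑ j ∈ t, f j) r = ∑ j ∈ t, rsmul (f j) r :=
  map_sum (AddMonoidHom.mk' (rsmul · r) fun a b => add_rsmul a b r) f t

theorem rsmul_sum {σ : Type*} (t : Finset σ) (a : A) (f : σ → R) :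
    rsmul a (∑ j ∈ t, f j) = ∑ j ∈ t, rsmul a (f j) :=
  map_sum (AddMonoidHom.mk' (rsmul a) (rsmul_add a)) f t

theorem rowMul_rowMul {n k : ℕ} (U : Fin n → A) (g : Fin k → Fin n → R) (Y : Fin k → R) :
    rowMul R U (rowMul R g Y) = rowMul R (fun p => rowMul R U (g p)) Y := by
  simp only [rowMul, sum_rsmul, Finset.sum_apply, rsmul_sum, ← rsmul_mul]
  exact Finset.sum_comm

theorem rowMul_pi_single_one {n : ℕ} (X : Fin n → R) :
    rowMul R (fun j => Pi.single j (1 : R)) X = X := by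
  ext i
  simp [rowMul, rsmul, Pi.single_apply]

variable (R) in
def posSpan {k : ℕ} (g : Fin k → A) : Set A :=
  {a | ∃ Y : Fin k → R, (∀ i, 0 ≤ Y i) ∧ a = rowMul R g Y}

theorem isFGConeIn_nonneg (n : ℕ) : IsFGConeIn R {X : Fin n → R | ∀ j, 0 ≤ X j} := by
  refine ⟨n, fun j => Pi.single j 1, ?_⟩
  ext X
  simp [rowMul_pi_single_one]

theorem posSpan_inter_setOf_rowMul_nonneg {n k l : ℕ} (U : Fin n → A) (g : Fin k → Fin n → R)
    (h : Fin l → Fin k → R)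
    (hh : {Y | 0 ≤ rowMul R (fun m => rowMul R U (g m)) Y ∧ ∀ m, 0 ≤ Y m} = posSpan R h) :
    posSpan R g ∩ {X | 0 ≤ rowMul R U X} = posSpan R fun p => rowMul R g (h p) := by
  ext X
  constructor
  · rintro ⟨⟨Y, hY, rfl⟩, hUX⟩
    have hYsol : Y ∈ posSpan R h := hh ▸ ⟨(rowMul_rowMul U g Y).symm ▸ hUX, hY⟩
    obtain ⟨Z, hZ, rfl⟩ := hYsol
    exact ⟨Z, hZ, rowMul_rowMul g h Z⟩
  · rintro ⟨Z, hZ, rfl⟩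
    have hYsol : rowMul R h Z ∈ posSpan R h := ⟨Z, hZ, rfl⟩
    obtain ⟨hV, hY⟩ := hh ▸ hYsol
    refine ⟨⟨_, hY, (rowMul_rowMul g h Z).symm⟩, ?_⟩
    show 0 ≤ rowMul R U _
    rwa [← rowMul_rowMul g h Z, rowMul_rowMul U g]

theorem IsFGConeIn.inter_setOf_rowMul_nonneg (hA : PoCoherent R A) {n : ℕ}
    {S : Set (Fin n → R)} (hS : IsFGConeIn R S) (U : Fin n → A) :
    IsFGConeIn R (S ∩ {X | 0 ≤ rowMul R U X}) := by
  obtain ⟨k, g, rfl⟩ := hS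
  obtain ⟨l, h, hh⟩ := hA k fun m => rowMul R U (g m)
  exact ⟨l, _, posSpan_inter_setOf_rowMul_nonneg U g h hh⟩

end RightModule

section DirectSum

variable {R : Type*} [PORing R] {ι : Type*} {A : ι → Type*}
  [∀ i, AddCommGroup (A i)] [∀ i, PartialOrder (A i)] [∀ i, PORightModule R (A i)]

theorem isFGConeIn_nonneg_inter_biInter (hA : ∀ i, PoCoherent R (A i)) {n : ℕ}
    (U : ∀ i, Fin n → A i) (s : Finset ι) :
    IsFGConeIn R ({X | ∀ j, 0 ≤ X j} ∩ ⋂ i ∈ s, {X | 0 ≤ rowMul R (U i) X}) := by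
  classical
  induction s using Finset.induction_on with
  | empty => simpa using isFGConeIn_nonneg n
  | insert i s _ ih =>
    rw [Finset.set_biInter_insert, Set.inter_left_comm, Set.inter_comm]
    exact ih.inter_setOf_rowMul_nonneg (hA i) (U i)

theorem DFinsupp.rowMul_apply {n : ℕ} (U : Fin n → Π₀ i, A i) (X : Fin n → R) (i : ι) :
    rowMul R U X i = rowMul R (fun j => U j i) X :=
  DFinsupp.finsetSum_apply _ _ i

theorem DFinsupp.zero_le_rowMul_iff {n : ℕ} {U : Fin n → Π₀ i, A i} {s : Finset ι}
    (hs : ∀ i ∉ s, ∀ j, U j i = 0) (X : Fin n → R) :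
    0 ≤ rowMul R U X ↔ ∀ i ∈ s, 0 ≤ rowMul R (fun j => U j i) X := by
  simp only [DFinsupp.le_def, DFinsupp.coe_zero, Pi.zero_apply, DFinsupp.rowMul_apply]
  refine ⟨fun h i _ => h i, fun h i => ?_⟩
  by_cases hi : i ∈ s
  · exact h i hi
  · simp [rowMul, hs i hi, rsmul_zero_left]

end DirectSum

theorem poCoherent_directSum_general
    (R : Type*) [PORing R] {ι : Type*} (A : ι → Type*)
    [∀ i, AddCommGroup (A i)] [∀ i, PartialOrder (A i)] [∀ i, PORightModule R (A i)]
    (hA : ∀ i, PoCoherent R (A i)) :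
    PoCoherent R (Π₀ i, A i) := by
  classical
  intro n U
  let s : Finset ι := Finset.univ.biUnion fun j => (U j).support
  have hs : ∀ i ∉ s, ∀ j, U j i = 0 := fun i hi j =>
    DFinsupp.notMem_support_iff.mp fun hij =>
      hi (Finset.mem_biUnion.mpr ⟨j, Finset.mem_univ j, hij⟩)
  have hsol : {X | 0 ≤ rowMul R U X ∧ ∀ j, 0 ≤ X j} =
      {X | ∀ j, 0 ≤ X j} ∩ ⋂ i ∈ s, {X | 0 ≤ rowMul R (fun j => U j i) X} := by
    ext X
    simp [DFinsupp.zero_le_rowMul_iff hs, and_comm]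
  rw [FinitelyRelatedAt, hsol]
  exact isFGConeIn_nonneg_inter_biInter hA _ s

/-- Let `R` be a right po-coherent po-ring and `(A i)_{i ∈ I}` a family of
po-coherent partially ordered right `R`-modules.  Then the direct sum `⊕_{i ∈ I} A i`
(realized as the finitely supported dependent functions `Π₀ i, A i`), partially ordered
coordinatewise, is a po-coherent partially ordered right `R`-module. -/
theorem poCoherent_directSum
    (R : Type*) [PORing R] {ι : Type*} (A : ι → Type*)
    [∀ i, AddCommGroup (A i)] [∀ i, PartialOrder (A i)] [∀ i, PORightModule R (A i)]
    (hR : RightPoCoherent R) (hA : ∀ i, PoCoherent R (A i)) :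
    PoCoherent R (Π₀ i, A i) :=
  poCoherent_directSum_general R A hA
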